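/- Boundedness of PGD iterates: choose z⁽⁰⁾ with ‖x − D z⁽⁰⁾‖₂ ≤ 1, set S = supp(z⁽⁰⁾), and let τ > 1 and s > max{2|S|, 2(1+λ|S|)/(λτ)}. If D_S has full column rank with smallest singular value σ_min(D_S) > 0, then every PGD iterate satisfies ‖z⁽ᵗ⁾‖₂² ≤ (1 + √(1+λ|S|))² / σ_min(D_S)² for all t ≥ 0. -/
import Mathlib


open scoped BigOperators

noncomputable def l2norm {m : ℕ} (v : Fin m → ℝ) : ℝ := Real.sqrt (∑ i, (v i)^2)

noncomputable def supp {n : ℕ} (z : Fin n → ℝ) : Finset (Fin n) := Finset.univ.filter (fun j => z j ≠ 0)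

noncomputable def l0norm {n : ℕ} (z : Fin n → ℝ) : ℕ := (supp z).card

noncomputable def hardThresh {n : ℕ} (θ : ℝ) (u : Fin n → ℝ) : Fin n → ℝ :=
  fun j => if |u j| < θ then 0 else u j

noncomputable def Lobj {d n : ℕ} (D : Matrix (Fin d) (Fin n) ℝ) (x : Fin d → ℝ) (lam : ℝ)
    (z : Fin n → ℝ) : ℝ := (l2norm (x - D.mulVec z))^2 + lam * (l0norm z : ℝ)

noncomputable def pgdSeq {d n : ℕ} (D : Matrix (Fin d) (Fin n) ℝ) (x : Fin d → ℝ)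
    (lam τ s : ℝ) (z0 : Fin n → ℝ) : ℕ → (Fin n → ℝ)
  | 0 => z0
  | (t+1) =>
      hardThresh (Real.sqrt (2*lam/(τ*s)))
        (fun j => pgdSeq D x lam τ s z0 t j
          - (2/(τ*s)) * (D.transpose.mulVec (D.mulVec (pgdSeq D x lam τ s z0 t) - x)) j)

noncomputable def sigmaMinCols {d n : ℕ} (D : Matrix (Fin d) (Fin n) ℝ) (S : Finset (Fin n)) : ℝ :=
  sInf {t | ∃ y : Fin n → ℝ, (∀ j ∉ S, y j = 0) ∧ l2norm y = 1 ∧ t = l2norm (D.mulVec y)}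

noncomputable def sigmaMaxCols {d n : ℕ} (D : Matrix (Fin d) (Fin n) ℝ) (S : Finset (Fin n)) : ℝ :=
  sSup {t | ∃ y : Fin n → ℝ, (∀ j ∉ S, y j = 0) ∧ l2norm y = 1 ∧ t = l2norm (D.mulVec y)}

noncomputable def sigmaMax {d n : ℕ} (D : Matrix (Fin d) (Fin n) ℝ) : ℝ :=
  sSup {t | ∃ y : Fin n → ℝ, l2norm y = 1 ∧ t = l2norm (D.mulVec y)}

def admissibleSubgrad {n : ℕ} (lam b : ℝ) (z r : Fin n → ℝ) : Prop :=
  (∀ j, z j ≠ 0 → r j = 0) ∧ (∀ j, z j = 0 → -(lam/b) ≤ r j ∧ r j ≤ lam/b)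

noncomputable def frobNorm {a b : ℕ} (M : Matrix (Fin a) (Fin b) ℝ) : ℝ :=
  Real.sqrt (∑ i, ∑ j, (M i j)^2)

set_option maxHeartbeats 1000000

lemma sumsq_nonneg {m : ℕ} (v : Fin m → ℝ) : 0 ≤ ∑ i, (v i)^2 :=
  Finset.sum_nonneg fun _ _ => sq_nonneg _

lemma l2norm_nonneg {m : ℕ} (v : Fin m → ℝ) : 0 ≤ l2norm v := Real.sqrt_nonneg _

lemma l2norm_sq {m : ℕ} (v : Fin m → ℝ) : (l2norm v)^2 = ∑ i, (v i)^2 :=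
  Real.sq_sqrt (sumsq_nonneg v)

lemma cauchy_sum {m : ℕ} (u v : Fin m → ℝ) :
    |∑ i, u i * v i| ≤ l2norm u * l2norm v := by
  rw [abs_le]
  refine ⟨?_, Real.sum_mul_le_sqrt_mul_sqrt Finset.univ u v⟩
  have h := Real.sum_mul_le_sqrt_mul_sqrt Finset.univ (fun i => -u i) v
  simp only [neg_mul, Finset.sum_neg_distrib, neg_sq] at h
  unfold l2norm
  linarith

lemma l2norm_triangle {m : ℕ} (u v : Fin m → ℝ) :
    l2norm (fun i => u i + v i) ≤ l2norm u + l2norm v := by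
  have hc : ∑ i, u i * v i ≤ l2norm u * l2norm v :=
    le_trans (le_abs_self _) (cauchy_sum u v)
  have hsum : ∑ i, (u i + v i)^2 ≤ (l2norm u + l2norm v)^2 := by
    have expand : ∑ i, (u i + v i)^2
        = (∑ i, (u i)^2) + 2*(∑ i, u i * v i) + ∑ i, (v i)^2 := by
      rw [Finset.mul_sum, ← Finset.sum_add_distrib, ← Finset.sum_add_distrib]
      apply Finset.sum_congr rfl; intro i _; ring
    rw [expand, ← l2norm_sq u, ← l2norm_sq v]; nlinarith
  calc l2norm (fun i => u i + v i) = Real.sqrt (∑ i, (u i + v i)^2) := rfl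
    _ ≤ Real.sqrt ((l2norm u + l2norm v)^2) := Real.sqrt_le_sqrt hsum
    _ = l2norm u + l2norm v := by
        rw [Real.sqrt_sq (by have := l2norm_nonneg u; have := l2norm_nonneg v; linarith)]

lemma l2norm_smul {m : ℕ} (a : ℝ) (v : Fin m → ℝ) :
    l2norm (fun i => a * v i) = |a| * l2norm v := by
  unfold l2norm
  rw [← Real.sqrt_sq_eq_abs, ← Real.sqrt_mul (sq_nonneg a), Finset.mul_sum]
  congr 1; apply Finset.sum_congr rfl; intro i _; ring

lemma supp_card_sum {n : ℕ} (z : Fin n → ℝ) :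
    ((supp z).card : ℝ) = ∑ j, (if z j ≠ 0 then (1:ℝ) else 0) := by
  unfold supp
  rw [Finset.card_filter]
  push_cast
  simp

lemma prox_coord (b lam : ℝ) (hb : 0 < b) (hlam : 0 < lam) (u w : ℝ) :
    (b/2)*((if |u| < Real.sqrt (2*lam/b) then (0:ℝ) else u) - u)^2
      + lam*(if (if |u| < Real.sqrt (2*lam/b) then (0:ℝ) else u) ≠ 0 then (1:ℝ) else 0)
    ≤ (b/2)*(w - u)^2 + lam*(if w ≠ 0 then (1:ℝ) else 0) := by
  set θ := Real.sqrt (2*lam/b) with hθ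
  have hθpos : 0 < θ := Real.sqrt_pos.2 (by positivity)
  have hθsq : θ^2 = 2*lam/b := Real.sq_sqrt (by positivity)
  have hsq : u^2 = |u|^2 := (sq_abs u).symm
  have hlb : (b/2)*θ^2 = lam := by rw [hθsq]; field_simp
  by_cases hcase : |u| < θ
  · rw [if_pos hcase, if_neg (by norm_num)]
    have hu2 : u^2 ≤ θ^2 := by nlinarith [abs_nonneg u]
    by_cases hw : w ≠ 0
    · rw [if_pos hw]
      nlinarith [sq_nonneg (w - u)]
    · push_neg at hw
      subst hw
      rw [if_neg (by norm_num)]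
  · rw [if_neg hcase]
    push_neg at hcase
    have hune : u ≠ 0 := by
      intro h; rw [h] at hcase; simp at hcase; linarith
    rw [if_pos hune]
    have hu2 : θ^2 ≤ u^2 := by nlinarith [abs_nonneg u]
    by_cases hw : w ≠ 0
    · rw [if_pos hw]
      nlinarith [sq_nonneg (w - u)]
    · push_neg at hw
      subst hw
      rw [if_neg (by norm_num)]
      nlinarith

lemma mulVec_apply' {d n : ℕ} (D : Matrix (Fin d) (Fin n) ℝ) (v : Fin n → ℝ) (i : Fin d) :
    D.mulVec v i = ∑ j, D i j * v j := by
  simp [Matrix.mulVec, dotProduct]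

lemma tmulVec_apply' {d n : ℕ} (D : Matrix (Fin d) (Fin n) ℝ) (w : Fin d → ℝ) (j : Fin n) :
    D.transpose.mulVec w j = ∑ i, D i j * w i := by
  simp [Matrix.mulVec, dotProduct, Matrix.transpose_apply]

lemma step_lemma {d n : ℕ} (D : Matrix (Fin d) (Fin n) ℝ) (x : Fin d → ℝ)
    (lam τ s : ℝ) (S : Finset (Fin n))
    (hD : ∀ j, l2norm (fun i => D i j) ≤ 1) (hlam : 0 < lam) (hτ : 1 < τ)
    (hsk : 2 * (S.card : ℝ) < s)
    (hs2 : 2 * (1 + lam * (S.card : ℝ)) < lam * τ * s)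
    (hspos : 0 < s)
    (z : Fin n → ℝ) (hzS : ∀ j ∉ S, z j = 0)
    (hF : (∑ i, (x i - D.mulVec z i)^2) + lam * ((supp z).card : ℝ)
            ≤ 1 + lam * (S.card : ℝ)) :
    (∀ j ∉ S, hardThresh (Real.sqrt (2*lam/(τ*s)))
        (fun j => z j - (2/(τ*s)) * (D.transpose.mulVec (D.mulVec z - x)) j) j = 0) ∧
    (∑ i, (x i - D.mulVec (hardThresh (Real.sqrt (2*lam/(τ*s)))
        (fun j => z j - (2/(τ*s)) * (D.transpose.mulVec (D.mulVec z - x)) j)) i)^2)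
      + lam * ((supp (hardThresh (Real.sqrt (2*lam/(τ*s)))
        (fun j => z j - (2/(τ*s)) * (D.transpose.mulVec (D.mulVec z - x)) j))).card : ℝ)
      ≤ 1 + lam * (S.card : ℝ) := by
  have hb : 0 < τ * s := by positivity
  set b := τ * s with hbdef
  set k := (S.card : ℝ) with hkdef
  have hk0 : 0 ≤ k := Nat.cast_nonneg _
  set c := 2 / b with hcdef
  have hc0 : 0 < c := by positivity
  set g : Fin n → ℝ := D.transpose.mulVec (D.mulVec z - x) with hgdef
  set zt : Fin n → ℝ := fun j => z j - c * g j with hztdef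
  set θ := Real.sqrt (2*lam/b) with hθdef
  have hθpos : 0 < θ := Real.sqrt_pos.2 (by positivity)
  have hθsq : θ^2 = 2*lam/b := Real.sq_sqrt (by positivity)
  set z' : Fin n → ℝ := hardThresh θ zt with hz'def
  have hz'app : ∀ j, z' j = if |zt j| < θ then 0 else zt j := fun j => rfl
  -- F z ≤ 1 + lam * k
  have hcard0 : (0:ℝ) ≤ lam * ((supp z).card : ℝ) := by positivity
  have hFz : (∑ i, (x i - D.mulVec z i)^2) ≤ 1 + lam * k := by linarith
  have hFznn : (0:ℝ) ≤ 1 + lam * k := by positivity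
  -- bound on |g j|
  have hgj : ∀ j, g j = ∑ i, D i j * (D.mulVec z i - x i) := by
    intro j
    rw [hgdef, tmulVec_apply']
    exact Finset.sum_congr rfl fun i _ => by rw [Pi.sub_apply]
  have hgbound : ∀ j, |g j| ≤ Real.sqrt (1 + lam * k) := by
    intro j
    rw [hgj j]
    have hcs := cauchy_sum (fun i => D i j) (fun i => D.mulVec z i - x i)
    have hnorm : l2norm (fun i => D.mulVec z i - x i) ≤ Real.sqrt (1 + lam * k) := by
      have heq : l2norm (fun i => D.mulVec z i - x i)
          = Real.sqrt (∑ i, (x i - D.mulVec z i)^2) := by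
        unfold l2norm
        congr 1
        exact Finset.sum_congr rfl fun i _ => by ring
      rw [heq]
      exact Real.sqrt_le_sqrt hFz
    have h1 := hD j
    have h2 := l2norm_nonneg (fun i => D i j)
    have h3 := l2norm_nonneg (fun i => D.mulVec z i - x i)
    calc |∑ i, D i j * (D.mulVec z i - x i)|
        ≤ l2norm (fun i => D i j) * l2norm (fun i => D.mulVec z i - x i) := hcs
      _ ≤ 1 * Real.sqrt (1 + lam * k) := by
          apply mul_le_mul h1 hnorm h3 zero_le_one
      _ = Real.sqrt (1 + lam * k) := one_mul _
  -- support stability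
  have hsupp : ∀ j ∉ S, z' j = 0 := by
    intro j hj
    rw [hz'app j, if_pos]
    have hzj : z j = 0 := hzS j hj
    have hztj : zt j = -(c * g j) := by rw [hztdef]; simp [hzj]
    have habs : |zt j| ≤ c * Real.sqrt (1 + lam * k) := by
      rw [hztj, abs_neg, abs_mul, abs_of_pos hc0]
      exact mul_le_mul_of_nonneg_left (hgbound j) (le_of_lt hc0)
    have hlt : c * Real.sqrt (1 + lam * k) < θ := by
      have hsq2 : (c * Real.sqrt (1 + lam * k))^2 < θ^2 := by
        rw [mul_pow, Real.sq_sqrt hFznn, hθsq, hcdef]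
        rw [div_pow, div_mul_eq_mul_div, div_lt_div_iff₀ (by positivity) hb]
        have hsb : 2*(1 + lam * k) < lam * b := by rw [hbdef]; linarith
        nlinarith [mul_lt_mul_of_pos_right hsb hb]
      exact lt_of_pow_lt_pow_left₀ 2 (le_of_lt hθpos) hsq2
    exact lt_of_le_of_lt habs hlt
  refine ⟨hsupp, ?_⟩
  -- descent part
  set v : Fin n → ℝ := fun j => z' j - z j with hvdef
  have hvS : ∀ j ∉ S, v j = 0 := by
    intro j hj; rw [hvdef]; simp [hsupp j hj, hzS j hj]
  -- prox inequality summed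
  have hprox : ∀ j, (b/2)*(z' j - zt j)^2 + lam*(if z' j ≠ 0 then (1:ℝ) else 0)
      ≤ (b/2)*(z j - zt j)^2 + lam*(if z j ≠ 0 then (1:ℝ) else 0) := by
    intro j
    have := prox_coord b lam hb hlam (zt j) (z j)
    rw [hθdef] at hz'app
    rw [hz'app j]
    exact this
  have hproxsum : (b/2)*(∑ j, (z' j - zt j)^2) + lam*((supp z').card : ℝ)
      ≤ (b/2)*(∑ j, (z j - zt j)^2) + lam*((supp z).card : ℝ) := by
    rw [supp_card_sum z', supp_card_sum z, Finset.mul_sum, Finset.mul_sum,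
        Finset.mul_sum, Finset.mul_sum, ← Finset.sum_add_distrib, ← Finset.sum_add_distrib]
    exact Finset.sum_le_sum fun j _ => hprox j
  -- expand the squares
  have hE1 : ∀ j, (z' j - zt j)^2 = (v j)^2 + 2*c*(v j * g j) + c^2*(g j)^2 := by
    intro j; rw [hztdef, hvdef]; ring
  have hE2 : ∀ j, (z j - zt j)^2 = c^2*(g j)^2 := by
    intro j; rw [hztdef]; ring
  have hsum1 : ∑ j, (z' j - zt j)^2
      = (∑ j, (v j)^2) + 2*c*(∑ j, v j * g j) + c^2*(∑ j, (g j)^2) := by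
    rw [Finset.mul_sum, Finset.mul_sum, ← Finset.sum_add_distrib, ← Finset.sum_add_distrib]
    exact Finset.sum_congr rfl fun j _ => hE1 j
  have hsum2 : ∑ j, (z j - zt j)^2 = c^2*(∑ j, (g j)^2) := by
    rw [Finset.mul_sum]
    exact Finset.sum_congr rfl fun j _ => hE2 j
  have hbc : b * c = 2 := by rw [hcdef]; field_simp
  -- prox reduces to
  have hkey : (b/2)*(∑ j, (v j)^2) + 2*(∑ j, v j * g j) + lam*((supp z').card : ℝ)
      ≤ lam*((supp z).card : ℝ) := by
    have hexp : b / 2 * ((∑ j, (v j)^2) + 2*c*(∑ j, v j * g j) + c^2*(∑ j, (g j)^2))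
        = b/2*(∑ j, (v j)^2) + (b*c)*(∑ j, v j * g j) + b/2*(c^2*(∑ j, (g j)^2)) := by ring
    rw [hsum1, hsum2, hexp, hbc] at hproxsum
    linarith
  -- F expansion
  have hDlin : ∀ i, D.mulVec z' i = D.mulVec z i + D.mulVec v i := by
    intro i
    rw [mulVec_apply', mulVec_apply', mulVec_apply', ← Finset.sum_add_distrib]
    apply Finset.sum_congr rfl; intro j _; rw [hvdef]; ring
  have hadj : ∑ i, (x i - D.mulVec z i) * D.mulVec v i = -(∑ j, v j * g j) := by
    have h1 : ∀ i, (x i - D.mulVec z i) * D.mulVec v i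
        = ∑ j, v j * (D i j * (x i - D.mulVec z i)) := by
      intro i; rw [mulVec_apply' D v i, Finset.mul_sum]
      apply Finset.sum_congr rfl; intro j _; ring
    calc ∑ i, (x i - D.mulVec z i) * D.mulVec v i
        = ∑ i, ∑ j, v j * (D i j * (x i - D.mulVec z i)) :=
          Finset.sum_congr rfl (fun i _ => h1 i)
      _ = ∑ j, ∑ i, v j * (D i j * (x i - D.mulVec z i)) := Finset.sum_comm
      _ = -(∑ j, v j * g j) := by
          rw [← Finset.sum_neg_distrib]
          apply Finset.sum_congr rfl; intro j _
          have hneg : ∑ i, D i j * (x i - D.mulVec z i) = -(g j) := by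
            rw [hgj j, ← Finset.sum_neg_distrib]
            apply Finset.sum_congr rfl; intro i _; ring
          calc ∑ i, v j * (D i j * (x i - D.mulVec z i))
              = v j * ∑ i, D i j * (x i - D.mulVec z i) := by rw [Finset.mul_sum]
            _ = v j * (-(g j)) := by rw [hneg]
            _ = -(v j * g j) := by ring
  have hFexp : ∑ i, (x i - D.mulVec z' i)^2
      = (∑ i, (x i - D.mulVec z i)^2) - 2*(∑ i, (x i - D.mulVec z i) * D.mulVec v i)
        + ∑ i, (D.mulVec v i)^2 := by
    rw [Finset.mul_sum, ← Finset.sum_sub_distrib, ← Finset.sum_add_distrib]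
    apply Finset.sum_congr rfl; intro i _
    rw [hDlin i]; ring
  rw [hadj] at hFexp
  -- column bound
  have hcol : ∀ j, ∑ i, (D i j)^2 ≤ 1 := by
    intro j
    have h1 := hD j
    have h2 := l2norm_nonneg (fun i => D i j)
    have h3 : (l2norm (fun i => D i j))^2 ≤ 1 := by nlinarith
    rw [l2norm_sq] at h3; exact h3
  have hDvbound : ∑ i, (D.mulVec v i)^2 ≤ k * ∑ j, (v j)^2 := by
    have hW : ∑ j ∈ S, (v j)^2 ≤ ∑ j, (v j)^2 :=
      Finset.sum_le_sum_of_subset_of_nonneg (Finset.subset_univ S) (fun j _ _ => sq_nonneg _)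
    have hWnn : (0:ℝ) ≤ ∑ j ∈ S, (v j)^2 := Finset.sum_nonneg fun _ _ => sq_nonneg _
    have hDS : ∑ j ∈ S, ∑ i, (D i j)^2 ≤ k := by
      calc ∑ j ∈ S, ∑ i, (D i j)^2 ≤ ∑ _j ∈ S, (1:ℝ) :=
            Finset.sum_le_sum (fun j _ => hcol j)
        _ = k := by rw [Finset.sum_const, nsmul_eq_mul, mul_one, hkdef]
    have hDSnn : (0:ℝ) ≤ ∑ j ∈ S, ∑ i, (D i j)^2 :=
      Finset.sum_nonneg fun _ _ => Finset.sum_nonneg fun _ _ => sq_nonneg _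
    have hrow : ∀ i, (D.mulVec v i)^2 ≤ (∑ j ∈ S, (D i j)^2) * (∑ j ∈ S, (v j)^2) := by
      intro i
      have hres : D.mulVec v i = ∑ j ∈ S, D i j * v j := by
        rw [mulVec_apply']
        symm
        apply Finset.sum_subset (Finset.subset_univ S)
        intro j _ hj; rw [hvS j hj, mul_zero]
      rw [hres]
      exact Finset.sum_mul_sq_le_sq_mul_sq S (fun j => D i j) v
    calc ∑ i, (D.mulVec v i)^2
        ≤ ∑ i, (∑ j ∈ S, (D i j)^2) * (∑ j ∈ S, (v j)^2) :=
          Finset.sum_le_sum (fun i _ => hrow i)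
      _ = (∑ j ∈ S, ∑ i, (D i j)^2) * (∑ j ∈ S, (v j)^2) := by
          rw [← Finset.sum_mul, Finset.sum_comm]
      _ ≤ k * ∑ j, (v j)^2 := mul_le_mul hDS hW hWnn hk0
  -- conclude
  have hks : k ≤ b / 2 := by
    rw [hbdef]
    nlinarith [mul_pos (sub_pos.2 hτ) hspos]
  have hprod2 : k * (∑ j, (v j)^2) ≤ (b/2) * (∑ j, (v j)^2) :=
    mul_le_mul_of_nonneg_right hks (sumsq_nonneg v)
  linarith [hFexp, hkey, hDvbound, hF, hprod2]

theorem stmt4 {d n : ℕ} (D : Matrix (Fin d) (Fin n) ℝ) (x : Fin d → ℝ)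
    (lam τ s : ℝ) (z0 : Fin n → ℝ)
    (hx : l2norm x ≤ 1) (hD : ∀ j, l2norm (fun i => D i j) ≤ 1)
    (hlam : 0 < lam) (hτ : 1 < τ)
    (hz0 : l2norm (x - D.mulVec z0) ≤ 1)
    (hs : s > max (2 * ((supp z0).card : ℝ))
                  (2 * (1 + lam * ((supp z0).card : ℝ)) / (lam * τ)))
    (hσ : 0 < sigmaMinCols D (supp z0)) :
    ∀ t : ℕ, (l2norm (pgdSeq D x lam τ s z0 t))^2
      ≤ (1 + Real.sqrt (1 + lam * ((supp z0).card : ℝ)))^2 / (sigmaMinCols D (supp z0))^2 := by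
  set S := supp z0 with hSdef
  set k := ((supp z0).card : ℝ) with hkdef
  have hk0 : (0:ℝ) ≤ k := Nat.cast_nonneg _
  have hτ0 : 0 < τ := lt_trans one_pos hτ
  have hsk : 2 * k < s := lt_of_le_of_lt (le_max_left _ _) hs
  have hsb : 2 * (1 + lam * k) / (lam * τ) < s := lt_of_le_of_lt (le_max_right _ _) hs
  have hspos : 0 < s := lt_trans (by positivity) hsb
  have hs2 : 2 * (1 + lam * k) < lam * τ * s := by
    rw [div_lt_iff₀ (by positivity)] at hsb
    nlinarith [hsb]
  -- the invariant
  have inv : ∀ t : ℕ, (∀ j ∉ S, pgdSeq D x lam τ s z0 t j = 0) ∧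
      (∑ i, (x i - D.mulVec (pgdSeq D x lam τ s z0 t) i)^2)
        + lam * ((supp (pgdSeq D x lam τ s z0 t)).card : ℝ) ≤ 1 + lam * (S.card : ℝ) := by
    intro t
    induction t with
    | zero =>
      constructor
      · intro j hj
        show z0 j = 0
        rw [hSdef] at hj
        simpa [supp] using hj
      · show (∑ i, (x i - D.mulVec z0 i)^2) + lam * ((supp z0).card : ℝ) ≤ 1 + lam * (S.card : ℝ)
        have hFe : ∑ i, (x i - D.mulVec z0 i)^2 = (l2norm (x - D.mulVec z0))^2 := by
          rw [l2norm_sq]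
          exact Finset.sum_congr rfl fun i _ => by rw [Pi.sub_apply]
        have hF1 : ∑ i, (x i - D.mulVec z0 i)^2 ≤ 1 := by
          rw [hFe]
          nlinarith [l2norm_nonneg (x - D.mulVec z0)]
        have : ((supp z0).card : ℝ) = (S.card : ℝ) := by rw [hSdef]
        rw [this]
        have : (0:ℝ) ≤ lam * (S.card : ℝ) := by positivity
        linarith
    | succ t ih =>
      have hrec : pgdSeq D x lam τ s z0 (t+1)
          = hardThresh (Real.sqrt (2*lam/(τ*s)))
            (fun j => pgdSeq D x lam τ s z0 t j
              - (2/(τ*s)) * (D.transpose.mulVec (D.mulVec (pgdSeq D x lam τ s z0 t) - x)) j) := by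
        rfl
      rw [hrec]
      have hsk' : 2 * (S.card : ℝ) < s := by rwa [hSdef, ← hkdef]
      have hs2' : 2 * (1 + lam * (S.card : ℝ)) < lam * τ * s := by rwa [hSdef, ← hkdef]
      exact step_lemma D x lam τ s S hD hlam hτ hsk' hs2' hspos
        (pgdSeq D x lam τ s z0 t) ih.1 ih.2
  -- conclusion
  intro t
  obtain ⟨h1, h2⟩ := inv t
  set z : Fin n → ℝ := pgdSeq D x lam τ s z0 t with hzdef
  have hSk : (S.card : ℝ) = k := by rw [hSdef, hkdef]
  have hFz : ∑ i, (x i - D.mulVec z i)^2 ≤ 1 + lam * k := by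
    have : (0:ℝ) ≤ lam * ((supp z).card : ℝ) := by positivity
    rw [hSk] at h2
    linarith
  have hAnn : (0:ℝ) ≤ 1 + Real.sqrt (1 + lam * k) := by positivity
  set σ := sigmaMinCols D S with hσdef
  set A := 1 + Real.sqrt (1 + lam * k) with hAdef
  -- bound on l2norm (D.mulVec z)
  have hDzA : l2norm (D.mulVec z) ≤ A := by
    have hsplit : D.mulVec z = fun i => x i + (D.mulVec z i - x i) := by
      funext i; ring
    have htri := l2norm_triangle x (fun i => D.mulVec z i - x i)
    have hsym : l2norm (fun i => D.mulVec z i - x i)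
        = Real.sqrt (∑ i, (x i - D.mulVec z i)^2) := by
      unfold l2norm
      congr 1
      exact Finset.sum_congr rfl fun i _ => by ring
    have hle2 : l2norm (fun i => D.mulVec z i - x i) ≤ Real.sqrt (1 + lam * k) := by
      rw [hsym]; exact Real.sqrt_le_sqrt hFz
    calc l2norm (D.mulVec z) = l2norm (fun i => x i + (D.mulVec z i - x i)) := by rw [← hsplit]
      _ ≤ l2norm x + l2norm (fun i => D.mulVec z i - x i) := htri
      _ ≤ 1 + Real.sqrt (1 + lam * k) := add_le_add hx hle2
  by_cases hzn : l2norm z = 0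
  · rw [hzn]
    have h0 : (0:ℝ) ≤ A^2/σ^2 := div_nonneg (sq_nonneg _) (sq_nonneg _)
    simpa using h0
  · have hr : 0 < l2norm z := lt_of_le_of_ne (l2norm_nonneg z) (Ne.symm hzn)
    set r := l2norm z with hrdef
    set y : Fin n → ℝ := fun j => r⁻¹ * z j with hydef
    have hy0 : ∀ j ∉ S, y j = 0 := by
      intro j hj; rw [hydef]; simp [h1 j hj]
    have hyn : l2norm y = 1 := by
      rw [hydef, l2norm_smul, abs_of_pos (inv_pos.2 hr), ← hrdef, inv_mul_cancel₀ (ne_of_gt hr)]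
    have hDy : D.mulVec y = fun i => r⁻¹ * D.mulVec z i := by
      funext i
      rw [mulVec_apply', mulVec_apply', Finset.mul_sum]
      apply Finset.sum_congr rfl; intro j _; rw [hydef]; ring
    have hDyn : l2norm (D.mulVec y) = r⁻¹ * l2norm (D.mulVec z) := by
      rw [hDy, l2norm_smul, abs_of_pos (inv_pos.2 hr)]
    have hbdd : BddBelow {t | ∃ y : Fin n → ℝ, (∀ j ∉ S, y j = 0) ∧ l2norm y = 1
        ∧ t = l2norm (D.mulVec y)} := by
      refine ⟨0, fun t ht => ?_⟩
      obtain ⟨w, -, -, rfl⟩ := ht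
      exact l2norm_nonneg _
    have hmem : l2norm (D.mulVec y) ∈ {t | ∃ y : Fin n → ℝ, (∀ j ∉ S, y j = 0) ∧ l2norm y = 1
        ∧ t = l2norm (D.mulVec y)} := ⟨y, hy0, hyn, rfl⟩
    have hle : σ ≤ l2norm (D.mulVec y) := by
      rw [hσdef, sigmaMinCols]
      exact csInf_le hbdd hmem
    have hσr : σ * r ≤ l2norm (D.mulVec z) := by
      rw [hDyn] at hle
      have h := mul_le_mul_of_nonneg_right hle (le_of_lt hr)
      have he : r⁻¹ * l2norm (D.mulVec z) * r = l2norm (D.mulVec z) := by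
        field_simp
      rwa [he] at h
    have hσrA : σ * r ≤ A := le_trans hσr hDzA
    have hsq : (σ * r)^2 ≤ A^2 := by
      have h0 : 0 ≤ σ * r := mul_nonneg (le_of_lt hσ) (le_of_lt hr)
      nlinarith
    rw [le_div_iff₀ (by positivity : (0:ℝ) < σ^2)]
    calc r^2 * σ^2 = (σ * r)^2 := by ring
      _ ≤ A^2 := hsq
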